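/- The chain with p_{0i} = 2^{-i} for i >= 1 and p_{i0} = p_{i,3i} = 1/2 for i >= 1 is positive recurrent, while its mean drift gamma_i = i/2 tends to infinity. -/

import Mathlib

open scoped ENNReal BigOperators
open Filter

/-- A discrete-time Markov chain on the nonnegative integers, given by its
row-stochastic transition matrix. -/
structure MarkovChain where
  p : ℕ → ℕ → ℝ≥0∞
  row_sum : ∀ i, ∑' j, p i j = 1

namespace MarkovChain

/-- `n`-step transition probabilities. -/
noncomputable def step (M : MarkovChain) : ℕ → ℕ → ℕ → ℝ≥0∞
  | 0, i, j => if i = j then 1 else 0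
  | (n+1), i, j => ∑' k, M.p i k * M.step n k j

/-- Irreducibility: every state reaches every other state with positive probability. -/
def Irreducible (M : MarkovChain) : Prop := ∀ i j, ∃ n, 0 < M.step n i j

/-- Probability, starting from `j`, that the chain reaches state `i` for the first
time at time `n` (time `0` counts iff `j = i`). -/
noncomputable def hitAt (M : MarkovChain) (i : ℕ) : ℕ → ℕ → ℝ≥0∞
  | 0, j => if j = i then 1 else 0
  | (n+1), j => if j = i then 0 else ∑' k, M.p j k * M.hitAt i n k

/-- Probability that the first return to `i` occurs at time `n + 1`. -/
noncomputable def firstReturn (M : MarkovChain) (i n : ℕ) : ℝ≥0∞ :=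
  ∑' k, M.p i k * M.hitAt i n k

/-- The chain is recurrent: return to each state is almost sure. -/
def Recurrent (M : MarkovChain) : Prop := ∀ i, ∑' n, M.firstReturn i n = 1

/-- The chain is positive recurrent: recurrent with finite expected return times. -/
def PositiveRecurrent (M : MarkovChain) : Prop :=
  M.Recurrent ∧ ∀ i, ∑' n : ℕ, ((n : ℝ≥0∞) + 1) * M.firstReturn i n < ⊤

/-- Null recurrent: recurrent but not positive recurrent. -/
def NullRecurrent (M : MarkovChain) : Prop := M.Recurrent ∧ ¬ M.PositiveRecurrent

/-- The chain is transient: return to each state happens with probability `< 1`. -/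
def Transient (M : MarkovChain) : Prop := ∀ i, ∑' n, M.firstReturn i n < 1

/-- Mean drift at state `i`. -/
noncomputable def drift (M : MarkovChain) (i : ℕ) : ℝ :=
  ∑' j, (M.p i j).toReal * ((j : ℝ) - i)

/-- The mean drift at `i` is finite (well-defined). -/
def DriftFinite (M : MarkovChain) (i : ℕ) : Prop :=
  Summable fun j => (M.p i j).toReal * ((j : ℝ) - i)

/-- Second-moment drift at state `i`. -/
noncomputable def secondMoment (M : MarkovChain) (i : ℕ) : ℝ :=
  ∑' j, (M.p i j).toReal * ((j : ℝ) - i) ^ 2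

/-- Downward uniformly bounded with bound `k`: no downward jumps longer than `k`. -/
def DownwardBounded (M : MarkovChain) (k : ℕ) : Prop :=
  ∀ i j, j + k < i → M.p i j = 0

/-- Uniformly bounded with bound `d`: no jumps longer than `d`. -/
def UniformlyBounded (M : MarkovChain) (d : ℕ) : Prop :=
  ∀ i j : ℕ, (d : ℤ) < |(i : ℤ) - j| → M.p i j = 0

end MarkovChain

/-!
Every positive state jumps to `0` with probability `1/2`, and `0` jumps to `i` with probability
`2^{-i}`. Hence from any starting state the chain visits a given state `i` within two steps with
probability at least `2^{-(i+1)}`, so the probability of avoiding `i` for `n` steps decays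
geometrically, uniformly in the starting state, which makes every return time almost surely finite
with finite mean.
-/

open Finset

theorem ENNReal.tsum_comp_div {m : ℕ} (hm : m ≠ 0) (f : ℕ → ℝ≥0∞) :
    ∑' n, f (n / m) = m * ∑' q, f q := by
  have : NeZero m := ⟨hm⟩
  rw [← (Nat.divModEquiv m).symm.tsum_eq, ENNReal.tsum_prod', ← ENNReal.tsum_mul_left]
  refine tsum_congr fun q => ?_
  have hdiv (r : Fin m) : (q * m + r) / m = q := by
    rw [Nat.add_comm, Nat.add_mul_div_right _ _ (Nat.pos_of_ne_zero hm),
      Nat.div_eq_of_lt r.is_lt, Nat.zero_add]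
  simp [hdiv]

namespace MarkovChain

/-- Probability, starting from `j`, that the chain avoids `i` at all times `0, …, n`. -/
noncomputable def survival (M : MarkovChain) (i : ℕ) : ℕ → ℕ → ℝ≥0∞
  | 0, j => if j = i then 0 else 1
  | (n+1), j => if j = i then 0 else ∑' k, M.p j k * M.survival i n k

variable {M : MarkovChain}

theorem p_le_one (j k : ℕ) : M.p j k ≤ 1 :=
  M.row_sum j ▸ ENNReal.le_tsum k

theorem hitAt_succ_of_ne {i j : ℕ} (h : j ≠ i) (n : ℕ) :
    M.hitAt i (n + 1) j = ∑' k, M.p j k * M.hitAt i n k := by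
  simp [hitAt, h]

theorem survival_self (i n : ℕ) : M.survival i n i = 0 := by
  cases n <;> simp [survival]

theorem survival_succ_of_ne {i j : ℕ} (h : j ≠ i) (n : ℕ) :
    M.survival i (n + 1) j = ∑' k, M.p j k * M.survival i n k := by
  simp [survival, h]

theorem survival_le_one (i n j : ℕ) : M.survival i n j ≤ 1 := by
  induction n generalizing j with
  | zero => simp only [survival]; split_ifs <;> simp
  | succ n ih =>
    rcases eq_or_ne j i with rfl | h
    · simp [survival_self]
    rw [survival_succ_of_ne h]
    calc ∑' k, M.p j k * M.survival i n k ≤ ∑' k, M.p j k * 1 := by gcongr; exact ih _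
      _ = 1 := by simp [M.row_sum]

theorem hitAt_zero_add_survival_zero (i j : ℕ) : M.hitAt i 0 j + M.survival i 0 j = 1 := by
  by_cases h : j = i <;> simp [hitAt, survival, h]

theorem hitAt_succ_add_survival_succ_of_ne {i j : ℕ} (h : j ≠ i) (n : ℕ) :
    M.hitAt i (n + 1) j + M.survival i (n + 1) j =
      ∑' k, M.p j k * (M.hitAt i n k + M.survival i n k) := by
  rw [hitAt_succ_of_ne h, survival_succ_of_ne h, ← ENNReal.tsum_add]
  simp_rw [mul_add]

theorem hitAt_succ_add_survival_succ (i n j : ℕ) :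
    M.hitAt i (n + 1) j + M.survival i (n + 1) j = M.survival i n j := by
  induction n generalizing j with
  | zero =>
    rcases eq_or_ne j i with rfl | h
    · simp [hitAt, survival_self]
    simp_rw [hitAt_succ_add_survival_succ_of_ne h, hitAt_zero_add_survival_zero, mul_one,
      M.row_sum]
    simp [survival, h]
  | succ n ih =>
    rcases eq_or_ne j i with rfl | h
    · simp [hitAt, survival_self]
    simp_rw [hitAt_succ_add_survival_succ_of_ne h, ih, survival_succ_of_ne h]

theorem survival_succ_le (i n j : ℕ) : M.survival i (n + 1) j ≤ M.survival i n j :=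
  hitAt_succ_add_survival_succ i n j ▸ le_add_self

theorem survival_antitone (i j : ℕ) : Antitone fun n => M.survival i n j :=
  antitone_nat_of_succ_le fun n => survival_succ_le i n j

theorem sum_range_hitAt_add_survival (i N j : ℕ) :
    ∑ n ∈ range (N + 1), M.hitAt i n j + M.survival i N j = 1 := by
  induction N with
  | zero => simpa using hitAt_zero_add_survival_zero i j
  | succ N ih => rw [sum_range_succ, add_assoc, hitAt_succ_add_survival_succ, ih]

theorem tsum_hitAt_le_one (i j : ℕ) : ∑' n, M.hitAt i n j ≤ 1 :=
  ENNReal.tsum_le_of_sum_range_le fun N =>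
    calc ∑ n ∈ range N, M.hitAt i n j ≤ ∑ n ∈ range (N + 1), M.hitAt i n j :=
          sum_le_sum_of_subset (range_subset_range.2 N.le_succ)
      _ ≤ 1 := sum_range_hitAt_add_survival i N j ▸ le_self_add

theorem tsum_hitAt_eq_one {i j : ℕ} (h : ∑' n, M.survival i n j ≠ ⊤) :
    ∑' n, M.hitAt i n j = 1 := by
  have hlim :=
    ((ENNReal.tendsto_nat_tsum fun n => M.hitAt i n j).comp (tendsto_add_atTop_nat 1)).add
      (ENNReal.tendsto_atTop_zero_of_tsum_ne_top h)
  rw [add_zero] at hlim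
  refine tendsto_nhds_unique hlim ?_
  simp only [Function.comp_def, sum_range_hitAt_add_survival]
  exact tendsto_const_nhds

theorem sum_range_mul_hitAt_add (i N j : ℕ) :
    ∑ n ∈ range N, ((n : ℝ≥0∞) + 1) * M.hitAt i n j
        + (N : ℝ≥0∞) * (M.hitAt i N j + M.survival i N j) =
      ∑ n ∈ range N, (M.hitAt i n j + M.survival i n j) := by
  induction N with
  | zero => simp
  | succ N ih =>
    rw [sum_range_succ, sum_range_succ, ← ih, hitAt_succ_add_survival_succ]
    push_cast
    ring

theorem tsum_mul_hitAt_le (i j : ℕ) :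
    ∑' n : ℕ, ((n : ℝ≥0∞) + 1) * M.hitAt i n j ≤ 1 + ∑' n, M.survival i n j := by
  refine ENNReal.tsum_le_of_sum_range_le fun N => ?_
  calc ∑ n ∈ range N, ((n : ℝ≥0∞) + 1) * M.hitAt i n j
      ≤ ∑ n ∈ range N, (M.hitAt i n j + M.survival i n j) :=
        sum_range_mul_hitAt_add i N j ▸ le_self_add
    _ ≤ ∑' n, (M.hitAt i n j + M.survival i n j) := ENNReal.sum_le_tsum _
    _ ≤ 1 + ∑' n, M.survival i n j := by
        rw [ENNReal.tsum_add]
        gcongr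
        exact tsum_hitAt_le_one i j

theorem survival_succ_add_le_one (i n j : ℕ) : M.survival i (n + 1) j + M.p j i ≤ 1 := by
  rcases eq_or_ne j i with rfl | h
  · simpa [survival_self] using p_le_one j j
  rw [survival_succ_of_ne h]
  calc ∑' k, M.p j k * M.survival i n k + M.p j i
      = ∑' k, M.p j k * (M.survival i n k + if k = i then 1 else 0) := by
        simp only [mul_add, ENNReal.tsum_add, mul_ite, mul_one, mul_zero, tsum_ite_eq]
    _ ≤ ∑' k, M.p j k * 1 := by
        gcongr with k
        split_ifs with hk
        · simp [hk, survival_self]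
        · simpa using survival_le_one i n k
    _ = 1 := by simp [M.row_sum]

theorem survival_add_le {i m n : ℕ} {ρ : ℝ≥0∞} (hρ : ∀ k, M.survival i n k ≤ ρ) (j : ℕ) :
    M.survival i (m + n) j ≤ M.survival i m j * ρ := by
  induction m generalizing j with
  | zero =>
    rcases eq_or_ne j i with rfl | h
    · simp [survival_self]
    · simpa [survival, h] using hρ j
  | succ m ih =>
    rcases eq_or_ne j i with rfl | h
    · simp [survival_self]
    rw [Nat.add_right_comm, survival_succ_of_ne h, survival_succ_of_ne h, ← ENNReal.tsum_mul_right]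
    refine ENNReal.tsum_le_tsum fun k => ?_
    rw [mul_assoc]
    gcongr
    exact ih k

theorem survival_mul_le_pow {i m : ℕ} {ρ : ℝ≥0∞} (hρ : ∀ k, M.survival i m k ≤ ρ) (q j : ℕ) :
    M.survival i (m * q) j ≤ ρ ^ q := by
  induction q generalizing j with
  | zero => simpa using survival_le_one i 0 j
  | succ q ih =>
    calc M.survival i (m * q + m) j ≤ M.survival i (m * q) j * ρ := survival_add_le hρ j
      _ ≤ ρ ^ q * ρ := by gcongr; exact ih j
      _ = ρ ^ (q + 1) := (pow_succ ρ q).symm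

theorem survival_le_pow_div {i m : ℕ} {ρ : ℝ≥0∞} (hρ : ∀ k, M.survival i m k ≤ ρ) (n j : ℕ) :
    M.survival i n j ≤ ρ ^ (n / m) :=
  (survival_antitone i j (Nat.mul_div_le n m)).trans (survival_mul_le_pow hρ _ j)

theorem tsum_survival_le {i m : ℕ} {ρ : ℝ≥0∞} (hm : m ≠ 0)
    (hρ : ∀ k, M.survival i m k ≤ ρ) (j : ℕ) :
    ∑' n, M.survival i n j ≤ m * (1 - ρ)⁻¹ :=
  calc ∑' n, M.survival i n j ≤ ∑' n, ρ ^ (n / m) :=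
        ENNReal.tsum_le_tsum (survival_le_pow_div hρ · j)
    _ = m * (1 - ρ)⁻¹ := by rw [ENNReal.tsum_comp_div hm, ENNReal.tsum_geometric]

theorem tsum_firstReturn {i : ℕ} (h : ∀ j, ∑' n, M.hitAt i n j = 1) :
    ∑' n, M.firstReturn i n = 1 := by
  simp only [firstReturn]
  rw [ENNReal.tsum_comm]
  simp [ENNReal.tsum_mul_left, h, M.row_sum]

theorem tsum_mul_firstReturn_le {i : ℕ} {C : ℝ≥0∞}
    (h : ∀ j, ∑' n : ℕ, ((n : ℝ≥0∞) + 1) * M.hitAt i n j ≤ C) :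
    ∑' n : ℕ, ((n : ℝ≥0∞) + 1) * M.firstReturn i n ≤ C := by
  simp only [firstReturn, ← ENNReal.tsum_mul_left]
  rw [ENNReal.tsum_comm]
  calc ∑' k, ∑' n : ℕ, ((n : ℝ≥0∞) + 1) * (M.p i k * M.hitAt i n k)
      = ∑' k, M.p i k * ∑' n : ℕ, ((n : ℝ≥0∞) + 1) * M.hitAt i n k := by
        simp only [← ENNReal.tsum_mul_left, mul_left_comm]
    _ ≤ ∑' k, M.p i k * C := by gcongr with k; exact h k
    _ = C := by rw [ENNReal.tsum_mul_right, M.row_sum, one_mul]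

/-- Doeblin's criterion, applied to one target state at a time. -/
theorem positiveRecurrent_of_survival_le
    (h : ∀ i, ∃ m ρ, m ≠ 0 ∧ ρ < 1 ∧ ∀ j, M.survival i m j ≤ ρ) : M.PositiveRecurrent := by
  have key : ∀ i, ∃ B < ⊤, ∀ j, ∑' n, M.survival i n j ≤ B := fun i => by
    obtain ⟨m, ρ, hm, hρ1, hρ⟩ := h i
    refine ⟨m * (1 - ρ)⁻¹, ?_, tsum_survival_le hm hρ⟩
    exact ENNReal.mul_lt_top (ENNReal.natCast_lt_top m) (ENNReal.inv_lt_top.2 (tsub_pos_of_lt hρ1))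
  refine ⟨fun i => ?_, fun i => ?_⟩ <;> obtain ⟨B, hB, hsurv⟩ := key i
  · exact tsum_firstReturn fun j => tsum_hitAt_eq_one ((hsurv j).trans_lt hB).ne
  · refine (tsum_mul_firstReturn_le fun j => (tsum_mul_hitAt_le i j).trans ?_).trans_lt
      (ENNReal.add_lt_top.2 ⟨ENNReal.one_lt_top, hB⟩)
    gcongr
    exact hsurv j

theorem tsum_p_mul_of_one_le
    (hi : ∀ i j : ℕ, 1 ≤ i →
      M.p i j = if j = 0 then (2 : ℝ≥0∞)⁻¹ else if j = 3 * i then (2 : ℝ≥0∞)⁻¹ else 0)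
    {j : ℕ} (hj : 1 ≤ j) (f : ℕ → ℝ≥0∞) :
    ∑' k, M.p j k * f k = 2⁻¹ * f 0 + 2⁻¹ * f (3 * j) := by
  rw [tsum_eq_sum (s := {0, 3 * j}), sum_pair (by omega)]
  · simp [hi j _ hj, show 3 * j ≠ 0 by omega]
  · intro k hk
    simp only [mem_insert, mem_singleton, not_or] at hk
    simp [hi j k hj, hk.1, hk.2]

theorem survival_two_add_le_one
    (h0 : ∀ j : ℕ, M.p 0 j = if j = 0 then 0 else (2 : ℝ≥0∞)⁻¹ ^ j)
    (hi : ∀ i j : ℕ, 1 ≤ i →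
      M.p i j = if j = 0 then (2 : ℝ≥0∞)⁻¹ else if j = 3 * i then (2 : ℝ≥0∞)⁻¹ else 0)
    (i j : ℕ) : M.survival i 2 j + 2⁻¹ ^ (i + 1) ≤ 1 := by
  rcases eq_or_ne j i with rfl | hji
  · simp [survival_self, pow_le_one₀]
  rcases Nat.eq_zero_or_pos i with rfl | hi1
  · calc M.survival 0 2 j + 2⁻¹ ^ (0 + 1) ≤ M.survival 0 1 j + M.p j 0 := by
          gcongr
          · exact survival_succ_le 0 1 j
          · simp [hi j 0 (by omega)]
      _ ≤ 1 := survival_succ_add_le_one 0 0 j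
  have hp0i : M.survival i 1 0 + 2⁻¹ ^ i ≤ 1 := by
    simpa [h0 i, hi1.ne'] using survival_succ_add_le_one (M := M) i 0 0
  rcases Nat.eq_zero_or_pos j with rfl | hj1
  · calc M.survival i 2 0 + 2⁻¹ ^ (i + 1) ≤ M.survival i 1 0 + 2⁻¹ ^ i :=
          add_le_add (survival_succ_le i 1 0)
            (pow_le_pow_right_of_le_one' (ENNReal.inv_le_one.2 one_le_two) i.le_succ)
      _ ≤ 1 := hp0i
  -- from `j ≥ 1` the chain falls to `0` and from there jumps straight to `i`
  rw [survival_succ_of_ne hji, tsum_p_mul_of_one_le hi hj1]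
  calc 2⁻¹ * M.survival i 1 0 + 2⁻¹ * M.survival i 1 (3 * j) + 2⁻¹ ^ (i + 1)
      = 2⁻¹ * (M.survival i 1 0 + 2⁻¹ ^ i) + 2⁻¹ * M.survival i 1 (3 * j) := by ring
    _ ≤ 2⁻¹ * 1 + 2⁻¹ * 1 := by gcongr; exact survival_le_one i 1 (3 * j)
    _ = 1 := by rw [mul_one, ENNReal.inv_two_add_inv_two]

theorem drift_eq_half
    (hi : ∀ i j : ℕ, 1 ≤ i →
      M.p i j = if j = 0 then (2 : ℝ≥0∞)⁻¹ else if j = 3 * i then (2 : ℝ≥0∞)⁻¹ else 0)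
    {i : ℕ} (hi1 : 1 ≤ i) : M.drift i = (i : ℝ) / 2 := by
  rw [drift, tsum_eq_sum (s := {0, 3 * i}), sum_pair (by omega)]
  · simp [hi i _ hi1, show 3 * i ≠ 0 by omega]
    ring
  · intro k hk
    simp only [mem_insert, mem_singleton, not_or] at hk
    simp [hi i k hi1, hk.1, hk.2]

end MarkovChain

/-- the chain with `p_{0i} = 2^{-i}` and `p_{i0} = p_{i,3i} = 1/2`
is positive recurrent although its mean drifts `γ_i = i/2` tend to infinity. -/
theorem stmt18 (M : MarkovChain)
    (h0 : ∀ j : ℕ, M.p 0 j = if j = 0 then 0 else (2 : ℝ≥0∞)⁻¹ ^ j)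
    (hi : ∀ i j : ℕ, 1 ≤ i →
      M.p i j = if j = 0 then (2 : ℝ≥0∞)⁻¹ else if j = 3 * i then (2 : ℝ≥0∞)⁻¹ else 0) :
    M.PositiveRecurrent ∧ (∀ i : ℕ, 1 ≤ i → M.drift i = (i : ℝ) / 2) ∧
    Filter.Tendsto M.drift Filter.atTop Filter.atTop := by
  refine ⟨M.positiveRecurrent_of_survival_le fun i => ⟨2, 1 - 2⁻¹ ^ (i + 1), two_ne_zero, ?_, ?_⟩,
    fun i hi1 => MarkovChain.drift_eq_half hi hi1, ?_⟩
  · exact ENNReal.sub_lt_self ENNReal.one_ne_top one_ne_zero (by simp)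
  · exact fun j =>
      ENNReal.le_sub_of_add_le_right (by simp) (MarkovChain.survival_two_add_le_one h0 hi i j)
  · refine (tendsto_natCast_atTop_atTop.atTop_div_const two_pos).congr' ?_
    filter_upwards [eventually_ge_atTop 1] with i hi1 using (MarkovChain.drift_eq_half hi hi1).symm
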